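/- arXiv:1907.05094 — 2 statements merged into one kernel-verified Lean document; each statement's English description precedes it below -/
import Mathlib

section
/- For two disjoint nonempty finite clusters A, B ⊂ R^d, (1/2)·min{|A|,|B|}·‖μ(A)−μ(B)‖² ≤ D(A,B) ≤ min{|A|,|B|}·‖μ(A)−μ(B)‖². -/
open Finset
open scoped Classical

noncomputable def centroid {d : ℕ} (P : Finset (EuclideanSpace ℝ (Fin d))) :
    EuclideanSpace ℝ (Fin d) :=
  (P.card : ℝ)⁻¹ • ∑ p ∈ P, p

noncomputable def Delta {d : ℕ} (P : Finset (EuclideanSpace ℝ (Fin d))) : ℝ :=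
  ∑ p ∈ P, ‖p - centroid P‖ ^ 2

noncomputable def mergeD {d : ℕ} (A B : Finset (EuclideanSpace ℝ (Fin d))) : ℝ :=
  Delta (A ∪ B) - Delta A - Delta B

/-!
By the parallel axis theorem, merging A and B costs exactly the weighted two-point variance
of their centroids about the joint centroid, `D(A,B) = |A||B|/(|A|+|B|) · ‖μ(A) − μ(B)‖²`.
The factor `ab/(a+b)` is half the harmonic mean of `a` and `b`, which lies between
`min a b / 2` and `min a b`.
-/

theorem mul_div_add_le_min {a b : ℝ} (ha : 0 ≤ a) (hb : 0 ≤ b) : a * b / (a + b) ≤ min a b := by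
  rcases (add_nonneg ha hb).eq_or_lt with hab | hab
  · rw [← hab, div_zero]; exact le_min ha hb
  rw [div_le_iff₀ hab]
  rcases le_total a b with h | h
  · rw [min_eq_left h]; nlinarith
  · rw [min_eq_right h]; nlinarith

theorem half_min_le_mul_div_add {a b : ℝ} (ha : 0 ≤ a) (hb : 0 ≤ b) :
    1 / 2 * min a b ≤ a * b / (a + b) := by
  rcases (add_nonneg ha hb).eq_or_lt with hab | hab
  · obtain ⟨rfl, rfl⟩ : a = 0 ∧ b = 0 := ⟨by linarith, by linarith⟩
    simp
  rw [le_div_iff₀ hab]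
  rcases le_total a b with h | h
  · rw [min_eq_left h]; nlinarith
  · rw [min_eq_right h]; nlinarith

theorem weighted_norm_sub_sq_add {E : Type*} [NormedAddCommGroup E] [InnerProductSpace ℝ E]
    {a b : ℝ} (hab : a + b ≠ 0) (x y : E) :
    a * ‖x - (a + b)⁻¹ • (a • x + b • y)‖ ^ 2 + b * ‖y - (a + b)⁻¹ • (a • x + b • y)‖ ^ 2 =
      a * b / (a + b) * ‖x - y‖ ^ 2 := by
  have hx : x - (a + b)⁻¹ • (a • x + b • y) = (b / (a + b)) • (x - y) := by
    match_scalars <;> field_simp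
    ring
  have hy : y - (a + b)⁻¹ • (a • x + b • y) = (a / (a + b)) • (y - x) := by
    match_scalars <;> field_simp
    ring
  rw [hx, hy, norm_smul, norm_smul, mul_pow, mul_pow, Real.norm_eq_abs, Real.norm_eq_abs, sq_abs,
    sq_abs, norm_sub_rev y]
  field_simp
  ring

section Clusters

variable {d : ℕ}

theorem card_smul_centroid (P : Finset (EuclideanSpace ℝ (Fin d))) :
    (P.card : ℝ) • centroid P = ∑ p ∈ P, p := by
  rcases P.eq_empty_or_nonempty with rfl | hP
  · simp
  rw [_root_.centroid, smul_inv_smul₀ (Nat.cast_ne_zero.mpr hP.card_ne_zero)]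

theorem sum_sub_centroid_eq_zero (P : Finset (EuclideanSpace ℝ (Fin d))) :
    ∑ p ∈ P, (p - centroid P) = 0 := by
  rw [sum_sub_distrib, sum_const, ← Nat.cast_smul_eq_nsmul ℝ, card_smul_centroid, sub_self]

theorem sum_norm_sub_sq_eq_Delta_add (P : Finset (EuclideanSpace ℝ (Fin d)))
    (c : EuclideanSpace ℝ (Fin d)) :
    ∑ p ∈ P, ‖p - c‖ ^ 2 = Delta P + P.card * ‖centroid P - c‖ ^ 2 := by
  have expand : ∀ p ∈ P, ‖p - c‖ ^ 2 = ‖p - centroid P‖ ^ 2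
      + 2 * inner ℝ (p - centroid P) (centroid P - c) + ‖centroid P - c‖ ^ 2 := fun p _ => by
    rw [← norm_add_sq_real, sub_add_sub_cancel]
  rw [sum_congr rfl expand, sum_add_distrib, sum_add_distrib, ← mul_sum, ← sum_inner,
    sum_sub_centroid_eq_zero, inner_zero_left, mul_zero, add_zero, sum_const, nsmul_eq_mul, Delta]

theorem centroid_union_of_disjoint {A B : Finset (EuclideanSpace ℝ (Fin d))}
    (hAB : Disjoint A B) :
    centroid (A ∪ B) =
      ((A.card : ℝ) + B.card)⁻¹ • ((A.card : ℝ) • centroid A + (B.card : ℝ) • centroid B) := by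
  rw [card_smul_centroid, card_smul_centroid, ← sum_union hAB, _root_.centroid,
    card_union_of_disjoint hAB, Nat.cast_add]

theorem mergeD_eq_of_disjoint {A B : Finset (EuclideanSpace ℝ (Fin d))} (hAB : Disjoint A B) :
    mergeD A B = A.card * B.card / (A.card + B.card) * ‖centroid A - centroid B‖ ^ 2 := by
  rcases (A ∪ B).eq_empty_or_nonempty with hempty | hne
  · obtain ⟨rfl, rfl⟩ := union_eq_empty.mp hempty
    simp [mergeD, Delta]
  have hcard : ((A.card : ℝ) + B.card) ≠ 0 := by
    rw [← Nat.cast_add, ← card_union_of_disjoint hAB]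
    exact Nat.cast_ne_zero.mpr hne.card_ne_zero
  rw [← weighted_norm_sub_sq_add hcard, ← centroid_union_of_disjoint hAB,
    mergeD, Delta, sum_union hAB, sum_norm_sub_sq_eq_Delta_add, sum_norm_sub_sq_eq_Delta_add]
  ring

end Clusters

theorem mergeD_bounds_general {d : ℕ} (A B : Finset (EuclideanSpace ℝ (Fin d)))
    (hAB : Disjoint A B) :
    (1 / 2) * (min (A.card : ℝ) (B.card : ℝ)) * ‖centroid A - centroid B‖ ^ 2 ≤ mergeD A B ∧
      mergeD A B ≤ (min (A.card : ℝ) (B.card : ℝ)) * ‖centroid A - centroid B‖ ^ 2 := by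
  have ha : (0 : ℝ) ≤ A.card := Nat.cast_nonneg _
  have hb : (0 : ℝ) ≤ B.card := Nat.cast_nonneg _
  rw [mergeD_eq_of_disjoint hAB]
  exact ⟨mul_le_mul_of_nonneg_right (half_min_le_mul_div_add ha hb) (sq_nonneg _),
    mul_le_mul_of_nonneg_right (mul_div_add_le_min ha hb) (sq_nonneg _)⟩

theorem mergeD_bounds {d : ℕ} (A B : Finset (EuclideanSpace ℝ (Fin d)))
    (hA : A.Nonempty) (hB : B.Nonempty) (hAB : Disjoint A B) :
    (1 / 2) * (min (A.card : ℝ) (B.card : ℝ)) * ‖centroid A - centroid B‖ ^ 2 ≤ mergeD A B ∧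
      mergeD A B ≤ (min (A.card : ℝ) (B.card : ℝ)) * ‖centroid A - centroid B‖ ^ 2 :=
  mergeD_bounds_general A B hAB
end

section
/- For any three finite, pairwise disjoint, nonempty clusters A, B, C ⊂ R (viewed as subsets of R¹, each being convex in the sense that no point of another cluster lies between two of its points) with μ(A) < μ(C) < μ(B), we have D(A,C) < D(A,B) or D(B,C) < D(A,B). -/
open Finset
open scoped Classical

noncomputable def mu1 (P : Finset ℝ) : ℝ := (∑ p ∈ P, p) / P.card

noncomputable def Delta1 (P : Finset ℝ) : ℝ := ∑ p ∈ P, (p - mu1 P) ^ 2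

noncomputable def mergeD1 (A B : Finset ℝ) : ℝ := Delta1 (A ∪ B) - Delta1 A - Delta1 B

/-- `A` is convex with respect to `Q`: no point of `Q` lies in the interval
spanned by `A`. -/
def ConvexWrt (A Q : Finset ℝ) (hA : A.Nonempty) : Prop :=
  ∀ x ∈ Q, x ∉ Set.Icc (A.min' hA) (A.max' hA)

/-!
Merging clusters of sizes `a`, `b` costs `a b / (a + b) · (μ₁ - μ₂)²`. Put `x = μ(C) - μ(A)`,
`y = μ(B) - μ(C)`. Since `a c / (a + c) < a`, the inequality `D(A,B) ≤ D(A,C)` forces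
`b (x + y)² < (a + b) x²`, and symmetrically `D(A,B) ≤ D(B,C)` forces `a (x + y)² < (a + b) y²`.
Adding them gives `(x + y)² < x² + y²`, impossible for `x, y > 0`.
-/

lemma Delta1_eq_sum_sq_sub (P : Finset ℝ) :
    Delta1 P = ∑ p ∈ P, p ^ 2 - (∑ p ∈ P, p) ^ 2 / P.card := by
  rcases P.eq_empty_or_nonempty with rfl | hP
  · simp [Delta1]
  have hn : (P.card : ℝ) ≠ 0 := by exact_mod_cast hP.card_pos.ne'
  simp only [Delta1, mu1, sub_sq, sum_add_distrib, sum_sub_distrib, ← sum_mul,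
    sum_const, nsmul_eq_mul]
  field_simp
  rw [← mul_sum]
  ring

lemma mergeD1_eq (X Y : Finset ℝ) (hX : X.Nonempty) (hY : Y.Nonempty) (h : Disjoint X Y) :
    mergeD1 X Y = X.card * Y.card / (X.card + Y.card) * (mu1 X - mu1 Y) ^ 2 := by
  have hx : (X.card : ℝ) ≠ 0 := by exact_mod_cast hX.card_pos.ne'
  have hy : (Y.card : ℝ) ≠ 0 := by exact_mod_cast hY.card_pos.ne'
  have hxy : (X.card : ℝ) + Y.card ≠ 0 := by positivity
  rw [mergeD1, Delta1_eq_sum_sq_sub, Delta1_eq_sum_sq_sub, Delta1_eq_sum_sq_sub,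
    sum_union h, sum_union h, card_union_of_disjoint h, mu1, mu1]
  push_cast
  field_simp
  ring

lemma mul_div_add_lt_left {a c : ℝ} (ha : 0 < a) (hc : 0 < c) : a * c / (a + c) < a := by
  rw [div_lt_iff₀ (by positivity)]
  nlinarith

lemma merge_cost_lt_or_lt {a b c p q r : ℝ} (ha : 0 < a) (hb : 0 < b) (hc : 0 < c)
    (hpq : p < q) (hqr : q < r) :
    a * c / (a + c) * (p - q) ^ 2 < a * b / (a + b) * (p - r) ^ 2 ∨
      b * c / (b + c) * (r - q) ^ 2 < a * b / (a + b) * (p - r) ^ 2 := by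
  by_contra! ⟨hAC, hBC⟩
  have hab : 0 < a + b := by positivity
  have hx : 0 < (p - q) ^ 2 := by nlinarith
  have hy : 0 < (r - q) ^ 2 := by nlinarith
  have hAC_lt : a * b / (a + b) * (p - r) ^ 2 < a * (p - q) ^ 2 :=
    hAC.trans_lt (mul_lt_mul_of_pos_right (mul_div_add_lt_left ha hc) hx)
  have hBC_lt : a * b / (a + b) * (p - r) ^ 2 < b * (r - q) ^ 2 :=
    hBC.trans_lt (mul_lt_mul_of_pos_right (mul_div_add_lt_left hb hc) hy)
  rw [div_mul_eq_mul_div, div_lt_iff₀ hab] at hAC_lt hBC_lt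
  have hb_bound : b * (p - r) ^ 2 < (a + b) * (p - q) ^ 2 := by nlinarith
  have ha_bound : a * (p - r) ^ 2 < (a + b) * (r - q) ^ 2 := by nlinarith
  nlinarith [mul_pos hab (mul_pos (sub_pos.mpr hpq) (sub_pos.mpr hqr))]

theorem convexity_one_dim_general (A B C : Finset ℝ)
    (hA : A.Nonempty) (hB : B.Nonempty) (hC : C.Nonempty)
    (hAB : Disjoint A B) (hAC : Disjoint A C) (hBC : Disjoint B C)
    (horder : mu1 A < mu1 C ∧ mu1 C < mu1 B) :
    mergeD1 A C < mergeD1 A B ∨ mergeD1 B C < mergeD1 A B := by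
  rw [mergeD1_eq A B hA hB hAB, mergeD1_eq A C hA hC hAC, mergeD1_eq B C hB hC hBC]
  exact merge_cost_lt_or_lt (by exact_mod_cast hA.card_pos) (by exact_mod_cast hB.card_pos)
    (by exact_mod_cast hC.card_pos) horder.1 horder.2

theorem convexity_one_dim (A B C : Finset ℝ)
    (hA : A.Nonempty) (hB : B.Nonempty) (hC : C.Nonempty)
    (hAB : Disjoint A B) (hAC : Disjoint A C) (hBC : Disjoint B C)
    (hAconv : ConvexWrt A (B ∪ C) hA)
    (hBconv : ConvexWrt B (A ∪ C) hB)
    (hCconv : ConvexWrt C (A ∪ B) hC)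
    (horder : mu1 A < mu1 C ∧ mu1 C < mu1 B) :
    mergeD1 A C < mergeD1 A B ∨ mergeD1 B C < mergeD1 A B :=
  convexity_one_dim_general A B C hA hB hC hAB hAC hBC horder
end
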